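/- Let ζ ∈ ℂ³ of the admissible form with ζ·ζ = 0. For each α ∈ Z̃³ there is a constant C_ζ > 0 (independent of α) such that |(1 + α·α)/(α·α + 2ζ·α)| ≤ C_ζ. Consequently G_ζ maps L²(Q) boundedly into H²(Q). -/

import Mathlib

open Complex

/-- α·α = |α|² for α = (β₁, β₂, β₃ - 1/2) ∈ Z̃³. -/
noncomputable def alphaNormSq (β : ℤ × ℤ × ℤ) : ℝ :=
  (β.1 : ℝ) ^ 2 + (β.2.1 : ℝ) ^ 2 + ((β.2.2 : ℝ) - 1 / 2) ^ 2

/-- The denominator α·α + 2ζ·α for ζ = (z1, m - 1/2, i t), t = (z1²+(m-1/2)²)^{1/2}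
(so that ζ·ζ = 0). -/
noncomputable def zetaDenom (z1 m : ℤ) (β : ℤ × ℤ × ℤ) : ℂ :=
  ((alphaNormSq β : ℝ) : ℂ)
    + 2 * (((z1 : ℝ) : ℂ) * ((β.1 : ℝ) : ℂ)
        + (((m : ℝ) - 1 / 2 : ℝ) : ℂ) * ((β.2.1 : ℝ) : ℂ)
        + Complex.I * ((Real.sqrt ((z1 : ℝ) ^ 2 + ((m : ℝ) - 1 / 2) ^ 2) : ℝ) : ℂ)
            * (((β.2.2 : ℝ) - 1 / 2 : ℝ) : ℂ))

/-!
Write t = |Re ζ| = |Im ζ| and A = α·α. Since Im(α·α + 2ζ·α) = 2t(β₃ - 1/2) and β₃ - 1/2 is a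
nonzero half-integer, the denominator has modulus at least t, which handles the finitely many α
with A < 16t². By Cauchy–Schwarz |2ζ·α|² ≤ 4t²A, so for A ≥ 16t² the perturbation 2ζ·α is at
most A/2 and the denominator has modulus at least A/2; as A ≥ 1/4 the quotient is then at most 10.
The bounded multiplier preserves square summability of Fourier coefficients.
-/

lemma half_le_abs_intCast_sub_half (n : ℤ) : (1 / 2 : ℝ) ≤ |(n : ℝ) - 1 / 2| := by
  have hodd : (1 : ℝ) ≤ |((2 * n - 1 : ℤ) : ℝ)| := by
    exact_mod_cast Int.one_le_abs (by omega)
  have hhalf : (n : ℝ) - 1 / 2 = ((2 * n - 1 : ℤ) : ℝ) / 2 := by push_cast; ring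
  rw [hhalf, abs_div, abs_two]
  linarith

lemma alphaNormSq_nonneg (β : ℤ × ℤ × ℤ) : 0 ≤ alphaNormSq β := by
  unfold alphaNormSq; positivity

lemma one_quarter_le_alphaNormSq (β : ℤ × ℤ × ℤ) : (1 / 4 : ℝ) ≤ alphaNormSq β := by
  have hw := half_le_abs_intCast_sub_half β.2.2
  have hw2 : (1 / 2 : ℝ) ^ 2 ≤ ((β.2.2 : ℝ) - 1 / 2) ^ 2 := by
    simpa only [sq_abs] using pow_le_pow_left₀ (by norm_num) hw 2
  unfold alphaNormSq
  nlinarith [sq_nonneg (β.1 : ℝ), sq_nonneg (β.2.1 : ℝ)]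

lemma one_add_div_norm_le_of_norm_sub_sq_le {A t : ℝ} {D : ℂ} (hA : 1 / 4 ≤ A) (ht : 0 < t)
    (htD : t ≤ ‖D‖) (hDA : ‖D - A‖ ^ 2 ≤ 4 * t ^ 2 * A) :
    (1 + A) / ‖D‖ ≤ max 10 ((1 + 16 * t ^ 2) / t) := by
  rcases le_or_gt (16 * t ^ 2) A with hlarge | hsmall
  · have hdev : ‖D - A‖ ≤ A / 2 := by
      apply abs_le_of_sq_le_sq' _ (by linarith) |>.2
      nlinarith
    have hD : A / 2 ≤ ‖D‖ := by
      have := norm_sub_norm_le (A : ℂ) D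
      rw [norm_sub_rev, Complex.norm_of_nonneg (by linarith)] at this
      linarith
    calc (1 + A) / ‖D‖ ≤ (1 + A) / (A / 2) := by gcongr
      _ ≤ 10 := by rw [div_le_iff₀ (by linarith)]; linarith
      _ ≤ _ := le_max_left _ _
  · calc (1 + A) / ‖D‖ ≤ (1 + 16 * t ^ 2) / t := by gcongr
      _ ≤ _ := le_max_right _ _

lemma summable_norm_mul_sq_of_norm_le {ι R : Type*} [SeminormedRing R] {a f : ι → R} {C : ℝ}
    (ha : ∀ i, ‖a i‖ ≤ C) (hf : Summable fun i => ‖f i‖ ^ 2) :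
    Summable fun i => ‖a i * f i‖ ^ 2 := by
  refine (hf.mul_left (C ^ 2)).of_nonneg_of_le (fun i => by positivity) fun i => ?_
  calc ‖a i * f i‖ ^ 2 ≤ (‖a i‖ * ‖f i‖) ^ 2 := by gcongr; exact norm_mul_le _ _
    _ ≤ C ^ 2 * ‖f i‖ ^ 2 := by rw [mul_pow]; gcongr; exact ha i

section

variable (z1 m : ℤ)

/-- The imaginary part `t` of the third coordinate of `ζ = (z1, m - 1/2, i t)`. -/
noncomputable def zetaImag : ℝ := Real.sqrt ((z1 : ℝ) ^ 2 + ((m : ℝ) - 1 / 2) ^ 2)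

lemma zetaImag_sq : zetaImag z1 m ^ 2 = (z1 : ℝ) ^ 2 + ((m : ℝ) - 1 / 2) ^ 2 :=
  Real.sq_sqrt (by positivity)

lemma zetaImag_pos : 0 < zetaImag z1 m := by
  have hm := half_le_abs_intCast_sub_half m
  have : ((m : ℝ) - 1 / 2) ≠ 0 := fun h => by rw [h, abs_zero] at hm; norm_num at hm
  exact Real.sqrt_pos.mpr (by positivity)

lemma zetaDenom_sub_re (β : ℤ × ℤ × ℤ) :
    (zetaDenom z1 m β - alphaNormSq β).re
      = 2 * ((z1 : ℝ) * β.1 + ((m : ℝ) - 1 / 2) * β.2.1) := by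
  simp [zetaDenom]

lemma zetaDenom_im (β : ℤ × ℤ × ℤ) :
    (zetaDenom z1 m β).im = 2 * zetaImag z1 m * ((β.2.2 : ℝ) - 1 / 2) := by
  simp [zetaDenom, zetaImag, mul_assoc]

lemma zetaImag_le_norm_zetaDenom (β : ℤ × ℤ × ℤ) : zetaImag z1 m ≤ ‖zetaDenom z1 m β‖ := by
  have hw := half_le_abs_intCast_sub_half β.2.2
  have him := Complex.abs_im_le_norm (zetaDenom z1 m β)
  rw [zetaDenom_im, abs_mul, abs_of_pos (by linarith [zetaImag_pos z1 m])] at him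
  nlinarith [zetaImag_pos z1 m]

/-- `|2ζ·α|² ≤ 4 |Re ζ|² |α|²`: Cauchy–Schwarz in the first two coordinates. -/
lemma norm_zetaDenom_sub_sq_le (β : ℤ × ℤ × ℤ) :
    ‖zetaDenom z1 m β - alphaNormSq β‖ ^ 2 ≤ 4 * zetaImag z1 m ^ 2 * alphaNormSq β := by
  have him : (zetaDenom z1 m β - alphaNormSq β).im * (zetaDenom z1 m β - alphaNormSq β).im
      = 4 * zetaImag z1 m ^ 2 * ((β.2.2 : ℝ) - 1 / 2) ^ 2 := by
    rw [Complex.sub_im, zetaDenom_im, Complex.ofReal_im, sub_zero]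
    ring
  rw [Complex.sq_norm, Complex.normSq_apply, him, zetaDenom_sub_re, alphaNormSq, zetaImag_sq]
  nlinarith [sq_nonneg ((z1 : ℝ) * β.2.1 - ((m : ℝ) - 1 / 2) * β.1)]

lemma norm_one_add_alphaNormSq_div_zetaDenom_le (β : ℤ × ℤ × ℤ) :
    ‖(1 + ((alphaNormSq β : ℝ) : ℂ)) / zetaDenom z1 m β‖
      ≤ max 10 ((1 + 16 * zetaImag z1 m ^ 2) / zetaImag z1 m) := by
  rw [norm_div, ← Complex.ofReal_one, ← Complex.ofReal_add,
    Complex.norm_of_nonneg (by linarith [alphaNormSq_nonneg β])]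
  exact one_add_div_norm_le_of_norm_sub_sq_le (one_quarter_le_alphaNormSq β)
    (zetaImag_pos z1 m) (zetaImag_le_norm_zetaDenom z1 m β) (norm_zetaDenom_sub_sq_le z1 m β)

end

/-- the multiplier (1 + α·α)/(α·α + 2ζ·α) is bounded uniformly in α ∈ Z̃³
by a constant C_ζ; consequently G_ζ maps L²(Q) boundedly into H²(Q), expressed via the
Fourier characterization of H²: square-summable coefficients are mapped to coefficients
with ∑ (1+|α|²)² |ĝ_α|² < ∞. -/
theorem stmt3 (z1 m : ℤ) :
    ∃ C > 0,
      (∀ β : ℤ × ℤ × ℤ,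
        ‖(1 + ((alphaNormSq β : ℝ) : ℂ)) / zetaDenom z1 m β‖ ≤ C) ∧
      ∀ fc : ℤ × ℤ × ℤ → ℂ, Summable (fun β => ‖fc β‖ ^ 2) →
        Summable (fun β => (1 + alphaNormSq β) ^ 2 * ‖fc β / zetaDenom z1 m β‖ ^ 2) := by
  have hbound := norm_one_add_alphaNormSq_div_zetaDenom_le z1 m
  refine ⟨_, lt_of_lt_of_le (by norm_num) (le_max_left _ _), hbound, fun fc hfc => ?_⟩
  convert summable_norm_mul_sq_of_norm_le hbound hfc using 2 with β
  rw [← Complex.ofReal_one, ← Complex.ofReal_add, div_mul_eq_mul_div, mul_div_assoc, norm_mul,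
    Complex.norm_of_nonneg (by linarith [alphaNormSq_nonneg β]), mul_pow]
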